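/- With notation as in the graph-surface setup (g₀ constant symmetric invertible 2×2, ε = ±1, ρ = 1 + ε g₀^{μν} φ_{,μ} φ_{,ν} ≠ 0, g_{αβ} = ρ^{-1/2}(g₀_{αβ} + ε φ_{,α} φ_{,β}), g^{αβ} = ρ^{1/2}(g₀^{αβ} − (ε/ρ) φ^α φ^β)), the minimality condition g^{αβ} φ_{,αβ} = 0 implies the divergence-free property ∂_μ g^{μν} = 0 for each ν ∈ {1,2}. -/

import Mathlib

open Matrix Real

/-- First partial derivative in direction `i`. -/
noncomputable def pd (i : Fin 2) (f : (Fin 2 → ℝ) → ℝ) (p : Fin 2 → ℝ) : ℝ :=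
  fderiv ℝ f p (Pi.single i 1)

/-- Second partial derivative. -/
noncomputable def pd2 (i j : Fin 2) (f : (Fin 2 → ℝ) → ℝ) (p : Fin 2 → ℝ) : ℝ :=
  pd i (fun q => pd j f q) p

/-- Third partial derivative. -/
noncomputable def pd3 (i j k : Fin 2) (f : (Fin 2 → ℝ) → ℝ) (p : Fin 2 → ℝ) : ℝ :=
  pd i (fun q => pd2 j k f q) p

/-- `φ^μ = g₀^{μα} φ_{,α}` (index raised with the inverse of `g₀`). -/
noncomputable def phiUp (g₀ : Matrix (Fin 2) (Fin 2) ℝ) (φ : (Fin 2 → ℝ) → ℝ)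
    (p : Fin 2 → ℝ) (μ : Fin 2) : ℝ :=
  ∑ α, g₀⁻¹ μ α * pd α φ p

/-- `ρ = 1 + ε g₀^{μν} φ_{,μ} φ_{,ν}`. -/
noncomputable def rho (g₀ : Matrix (Fin 2) (Fin 2) ℝ) (ε : ℝ) (φ : (Fin 2 → ℝ) → ℝ)
    (p : Fin 2 → ℝ) : ℝ :=
  1 + ε * ∑ μ, ∑ ν, g₀⁻¹ μ ν * pd μ φ p * pd ν φ p

/-- Induced metric `h_{μν} = g₀_{μν} + ε φ_{,μ} φ_{,ν}` of the graph surface. -/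
noncomputable def hLow (g₀ : Matrix (Fin 2) (Fin 2) ℝ) (ε : ℝ) (φ : (Fin 2 → ℝ) → ℝ)
    (p : Fin 2 → ℝ) : Matrix (Fin 2) (Fin 2) ℝ :=
  fun μ ν => g₀ μ ν + ε * pd μ φ p * pd ν φ p

/-- `h^{μν} = g₀^{μν} - (ε/ρ) φ^μ φ^ν`. -/
noncomputable def hUp (g₀ : Matrix (Fin 2) (Fin 2) ℝ) (ε : ℝ) (φ : (Fin 2 → ℝ) → ℝ)
    (p : Fin 2 → ℝ) : Matrix (Fin 2) (Fin 2) ℝ :=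
  fun μ ν => g₀⁻¹ μ ν - (ε / rho g₀ ε φ p) * phiUp g₀ φ p μ * phiUp g₀ φ p ν

/-- `λ₀ = (1/2)[φ^{αβ} φ_{,αβ} - (φ^α_{,α})²]`. -/
noncomputable def lam0 (g₀ : Matrix (Fin 2) (Fin 2) ℝ) (φ : (Fin 2 → ℝ) → ℝ)
    (p : Fin 2 → ℝ) : ℝ :=
  (1/2) * ((∑ α, ∑ β, (∑ μ, ∑ ν, g₀⁻¹ α μ * g₀⁻¹ β ν * pd2 μ ν φ p) * pd2 α β φ p)
    - (∑ α, ∑ β, g₀⁻¹ α β * pd2 α β φ p)^2)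

/-- Conformal metric `g_{αβ} = ρ^{-1/2} h_{αβ}`. -/
noncomputable def gLow (g₀ : Matrix (Fin 2) (Fin 2) ℝ) (ε : ℝ) (φ : (Fin 2 → ℝ) → ℝ)
    (p : Fin 2 → ℝ) : Matrix (Fin 2) (Fin 2) ℝ :=
  fun α β => (Real.sqrt (rho g₀ ε φ p))⁻¹ * (g₀ α β + ε * pd α φ p * pd β φ p)

/-- Inverse conformal metric `g^{αβ} = ρ^{1/2} (g₀^{αβ} - (ε/ρ) φ^α φ^β)`. -/
noncomputable def gUp (g₀ : Matrix (Fin 2) (Fin 2) ℝ) (ε : ℝ) (φ : (Fin 2 → ℝ) → ℝ)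
    (p : Fin 2 → ℝ) : Matrix (Fin 2) (Fin 2) ℝ :=
  fun α β => Real.sqrt (rho g₀ ε φ p) *
    (g₀⁻¹ α β - (ε / rho g₀ ε φ p) * phiUp g₀ φ p α * phiUp g₀ φ p β)

/-- The minimality condition `h^{αβ} φ_{,αβ} = 0` at a point. -/
noncomputable def minimalAt (g₀ : Matrix (Fin 2) (Fin 2) ℝ) (ε : ℝ) (φ : (Fin 2 → ℝ) → ℝ)
    (p : Fin 2 → ℝ) : Prop :=
  ∑ α, ∑ β, hUp g₀ ε φ p α β * pd2 α β φ p = 0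

section helpers

lemma contDiff_pd {f : (Fin 2 → ℝ) → ℝ} (hf : ContDiff ℝ ((⊤:ℕ∞) : WithTop ℕ∞) f) (i : Fin 2) :
    ContDiff ℝ ((⊤:ℕ∞) : WithTop ℕ∞) (pd i f) := by
  have h1 : ContDiff ℝ ((⊤:ℕ∞) : WithTop ℕ∞) (fderiv ℝ f) := (contDiff_infty_iff_fderiv.mp hf).2
  exact ((ContinuousLinearMap.apply ℝ ℝ (Pi.single i 1)).contDiff.of_le le_top).comp h1

lemma diff_pd {f : (Fin 2 → ℝ) → ℝ} (hf : ContDiff ℝ ((⊤:ℕ∞) : WithTop ℕ∞) f) (i : Fin 2) :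
    Differentiable ℝ (pd i f) :=
  (contDiff_pd hf i).differentiable (by simp)

lemma pd_add {f g : (Fin 2 → ℝ) → ℝ} {p} (hf : DifferentiableAt ℝ f p)
    (hg : DifferentiableAt ℝ g p) (i : Fin 2) :
    pd i (fun q => f q + g q) p = pd i f p + pd i g p := by
  simp [pd, fderiv_fun_add hf hg]

lemma pd_sub {f g : (Fin 2 → ℝ) → ℝ} {p} (hf : DifferentiableAt ℝ f p)
    (hg : DifferentiableAt ℝ g p) (i : Fin 2) :
    pd i (fun q => f q - g q) p = pd i f p - pd i g p := by
  simp [pd, fderiv_fun_sub hf hg]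

lemma pd_mul {f g : (Fin 2 → ℝ) → ℝ} {p} (hf : DifferentiableAt ℝ f p)
    (hg : DifferentiableAt ℝ g p) (i : Fin 2) :
    pd i (fun q => f q * g q) p = pd i f p * g p + f p * pd i g p := by
  simp [pd, fderiv_fun_mul hf hg]; ring

lemma pd_const (c : ℝ) (p) (i : Fin 2) : pd i (fun _ => c) p = 0 := by
  simp [pd]

lemma pd_const_mul {f : (Fin 2 → ℝ) → ℝ} {p} (hf : DifferentiableAt ℝ f p) (c : ℝ) (i : Fin 2) :
    pd i (fun q => c * f q) p = c * pd i f p := by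
  simp [pd, fderiv_const_mul hf]

lemma pd_mul_const {f : (Fin 2 → ℝ) → ℝ} {p} (hf : DifferentiableAt ℝ f p) (c : ℝ) (i : Fin 2) :
    pd i (fun q => f q * c) p = pd i f p * c := by
  simp only [mul_comm _ c]
  exact pd_const_mul hf c i

lemma pd_inv {f : (Fin 2 → ℝ) → ℝ} {p} (hf : DifferentiableAt ℝ f p) (hne : f p ≠ 0) (i : Fin 2) :
    pd i (fun q => (f q)⁻¹) p = -pd i f p / (f p)^2 := by
  have h := (hasDerivAt_inv hne).comp_hasFDerivAt p hf.hasFDerivAt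
  have he : (fun q => (f q)⁻¹) = (fun x : ℝ => x⁻¹) ∘ f := rfl
  rw [pd, he, h.fderiv]
  simp [pd]; ring

lemma pd_sqrt {f : (Fin 2 → ℝ) → ℝ} {p} (hf : DifferentiableAt ℝ f p) (hpos : 0 < f p) (i : Fin 2) :
    pd i (fun q => Real.sqrt (f q)) p = pd i f p / (2 * Real.sqrt (f p)) := by
  have h := (Real.hasDerivAt_sqrt (ne_of_gt hpos)).comp_hasFDerivAt p hf.hasFDerivAt
  have he : (fun q => Real.sqrt (f q)) = (fun x : ℝ => Real.sqrt x) ∘ f := rfl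
  rw [pd, he, h.fderiv]
  simp [pd]; ring

lemma pd2_eq_fderiv2 {f : (Fin 2 → ℝ) → ℝ} (hf : ContDiff ℝ ((⊤:ℕ∞) : WithTop ℕ∞) f)
    (i j : Fin 2) (p : Fin 2 → ℝ) :
    pd2 i j f p = fderiv ℝ (fderiv ℝ f) p (Pi.single i 1) (Pi.single j 1) := by
  have hdf : Differentiable ℝ (fderiv ℝ f) :=
    (contDiff_infty_iff_fderiv.mp hf).2.differentiable (by simp)
  have he : (fun q => pd j f q) = ⇑(ContinuousLinearMap.apply ℝ ℝ (Pi.single j 1)) ∘ fderiv ℝ f := rfl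
  have h := ((ContinuousLinearMap.apply ℝ ℝ (Pi.single j 1)).hasFDerivAt.comp p (hdf p).hasFDerivAt)
  rw [pd2, pd, he, h.fderiv]
  rfl

lemma pd2_symm {f : (Fin 2 → ℝ) → ℝ} (hf : ContDiff ℝ ((⊤:ℕ∞) : WithTop ℕ∞) f)
    (i j : Fin 2) (p : Fin 2 → ℝ) : pd2 i j f p = pd2 j i f p := by
  rw [pd2_eq_fderiv2 hf, pd2_eq_fderiv2 hf]
  have hdf : Differentiable ℝ f := hf.differentiable (by simp)
  have h2 : HasFDerivAt (fderiv ℝ f) (fderiv ℝ (fderiv ℝ f) p) p :=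
    (((contDiff_infty_iff_fderiv.mp hf).2.differentiable
      (by simp)) p).hasFDerivAt
  exact second_derivative_symmetric (fun y => (hdf y).hasFDerivAt) h2 _ _

end helpers

section formulas

variable {g₀ : Matrix (Fin 2) (Fin 2) ℝ} {ε : ℝ} {φ : (Fin 2 → ℝ) → ℝ}

lemma phiUp_eq (g₀) (φ) (q) (μ : Fin 2) :
    phiUp g₀ φ q μ = g₀⁻¹ μ 0 * pd 0 φ q + g₀⁻¹ μ 1 * pd 1 φ q := by
  simp [phiUp, Fin.sum_univ_two]

lemma rho_eq (g₀) (ε : ℝ) (φ) (q) :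
    rho g₀ ε φ q = 1 + ε * (g₀⁻¹ 0 0 * pd 0 φ q * pd 0 φ q + g₀⁻¹ 0 1 * pd 0 φ q * pd 1 φ q
      + g₀⁻¹ 1 0 * pd 1 φ q * pd 0 φ q + g₀⁻¹ 1 1 * pd 1 φ q * pd 1 φ q) := by
  simp only [rho, Fin.sum_univ_two]; ring

variable (hφ : ContDiff ℝ ((⊤:ℕ∞) : WithTop ℕ∞) φ)
include hφ

lemma diff_phiUp (g₀) (μ : Fin 2) : Differentiable ℝ (fun q => phiUp g₀ φ q μ) := by
  have : (fun q => phiUp g₀ φ q μ) =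
      fun q => g₀⁻¹ μ 0 * pd 0 φ q + g₀⁻¹ μ 1 * pd 1 φ q := funext fun q => phiUp_eq g₀ φ q μ
  rw [this]
  exact ((diff_pd hφ 0).const_mul _).add ((diff_pd hφ 1).const_mul _)

lemma diff_rho (g₀) (ε : ℝ) : Differentiable ℝ (rho g₀ ε φ) := by
  have : rho g₀ ε φ = fun q => 1 + ε * (g₀⁻¹ 0 0 * pd 0 φ q * pd 0 φ q
      + g₀⁻¹ 0 1 * pd 0 φ q * pd 1 φ q + g₀⁻¹ 1 0 * pd 1 φ q * pd 0 φ q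
      + g₀⁻¹ 1 1 * pd 1 φ q * pd 1 φ q) := funext fun q => rho_eq g₀ ε φ q
  rw [this]
  have d0 := diff_pd hφ 0; have d1 := diff_pd hφ 1
  exact (differentiable_const 1).add ((((((d0.const_mul _).mul d0).add
    ((d0.const_mul _).mul d1)).add ((d1.const_mul _).mul d0)).add
    ((d1.const_mul _).mul d1)).const_mul ε)

lemma pd_phiUp (g₀) (i μ : Fin 2) (p) :
    pd i (fun q => phiUp g₀ φ q μ) p = g₀⁻¹ μ 0 * pd2 i 0 φ p + g₀⁻¹ μ 1 * pd2 i 1 φ p := by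
  have he : (fun q => phiUp g₀ φ q μ) =
      fun q => (fun q => g₀⁻¹ μ 0 * pd 0 φ q) q + (fun q => g₀⁻¹ μ 1 * pd 1 φ q) q :=
    funext fun q => phiUp_eq g₀ φ q μ
  rw [he, pd_add ((diff_pd hφ 0).const_mul _ p) ((diff_pd hφ 1).const_mul _ p),
    pd_const_mul (diff_pd hφ 0 p), pd_const_mul (diff_pd hφ 1 p)]
  rfl

lemma pd_rho (g₀) (ε : ℝ) (i : Fin 2) (p) :
    pd i (rho g₀ ε φ) p = ε * (g₀⁻¹ 0 0 * (pd2 i 0 φ p * pd 0 φ p + pd 0 φ p * pd2 i 0 φ p)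
      + g₀⁻¹ 0 1 * (pd2 i 0 φ p * pd 1 φ p + pd 0 φ p * pd2 i 1 φ p)
      + g₀⁻¹ 1 0 * (pd2 i 1 φ p * pd 0 φ p + pd 1 φ p * pd2 i 0 φ p)
      + g₀⁻¹ 1 1 * (pd2 i 1 φ p * pd 1 φ p + pd 1 φ p * pd2 i 1 φ p)) := by
  have d0 := diff_pd hφ 0; have d1 := diff_pd hφ 1
  have he : rho g₀ ε φ = fun q => (fun _ => (1:ℝ)) q +
      (fun q => ε * ((fun q => (fun q => (fun q => (fun q => g₀⁻¹ 0 0 * pd 0 φ q) q * pd 0 φ q) q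
        + (fun q => (fun q => g₀⁻¹ 0 1 * pd 0 φ q) q * pd 1 φ q) q) q
        + (fun q => (fun q => g₀⁻¹ 1 0 * pd 1 φ q) q * pd 0 φ q) q) q
        + (fun q => (fun q => g₀⁻¹ 1 1 * pd 1 φ q) q * pd 1 φ q) q)) q :=
    funext fun q => rho_eq g₀ ε φ q
  have D1 : DifferentiableAt ℝ (fun q => g₀⁻¹ 0 0 * pd 0 φ q * pd 0 φ q) p :=
    ((d0.const_mul _).mul d0) p
  have D2 : DifferentiableAt ℝ (fun q => g₀⁻¹ 0 1 * pd 0 φ q * pd 1 φ q) p :=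
    ((d0.const_mul _).mul d1) p
  have D3 : DifferentiableAt ℝ (fun q => g₀⁻¹ 1 0 * pd 1 φ q * pd 0 φ q) p :=
    ((d1.const_mul _).mul d0) p
  have D4 : DifferentiableAt ℝ (fun q => g₀⁻¹ 1 1 * pd 1 φ q * pd 1 φ q) p :=
    ((d1.const_mul _).mul d1) p
  rw [he, pd_add (differentiableAt_const 1)
      ((((D1.fun_add D2).fun_add D3).fun_add D4).const_mul ε),
    pd_const, pd_const_mul (((D1.fun_add D2).fun_add D3).fun_add D4),
    pd_add ((D1.fun_add D2).fun_add D3) D4, pd_add (D1.fun_add D2) D3, pd_add D1 D2,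
    pd_mul ((d0.const_mul _) p) (d0 p), pd_mul ((d0.const_mul _) p) (d1 p),
    pd_mul ((d1.const_mul _) p) (d0 p), pd_mul ((d1.const_mul _) p) (d1 p),
    pd_const_mul (d0 p), pd_const_mul (d0 p), pd_const_mul (d1 p), pd_const_mul (d1 p)]
  simp only [pd2]
  ring

end formulas

section gup

variable {g₀ : Matrix (Fin 2) (Fin 2) ℝ} {ε : ℝ} {φ : (Fin 2 → ℝ) → ℝ}

lemma gUp_eq (g₀) (ε : ℝ) (φ) {q} (hq : 0 < rho g₀ ε φ q) (μ ν : Fin 2) :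
    gUp g₀ ε φ q μ ν = Real.sqrt (rho g₀ ε φ q) * g₀⁻¹ μ ν
      - ε * ((Real.sqrt (rho g₀ ε φ q))⁻¹ * (phiUp g₀ φ q μ * phiUp g₀ φ q ν)) := by
  have h2 : Real.sqrt (rho g₀ ε φ q) * Real.sqrt (rho g₀ ε φ q) = rho g₀ ε φ q :=
    Real.mul_self_sqrt hq.le
  have hs : Real.sqrt (rho g₀ ε φ q) ≠ 0 := ne_of_gt (Real.sqrt_pos.mpr hq)
  have hr : rho g₀ ε φ q ≠ 0 := ne_of_gt hq
  show Real.sqrt (rho g₀ ε φ q) * (g₀⁻¹ μ ν - (ε / rho g₀ ε φ q) * phiUp g₀ φ q μ * phiUp g₀ φ q ν) = _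
  field_simp
  linear_combination (-(ε) * phiUp g₀ φ q μ * phiUp g₀ φ q ν) * h2

variable (hφ : ContDiff ℝ ((⊤:ℕ∞) : WithTop ℕ∞) φ)
include hφ

lemma pd_gUp (g₀) (ε : ℝ) (hρ : ∀ q, 0 < rho g₀ ε φ q) (i μ ν : Fin 2) (p) :
    pd i (fun q => gUp g₀ ε φ q μ ν) p =
      (pd i (rho g₀ ε φ) p / (2 * Real.sqrt (rho g₀ ε φ p))) * g₀⁻¹ μ ν
      - ε * ((-(pd i (rho g₀ ε φ) p / (2 * Real.sqrt (rho g₀ ε φ p))) / (Real.sqrt (rho g₀ ε φ p))^2)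
              * (phiUp g₀ φ p μ * phiUp g₀ φ p ν)
          + (Real.sqrt (rho g₀ ε φ p))⁻¹ *
            (pd i (fun q => phiUp g₀ φ q μ) p * phiUp g₀ φ p ν
              + phiUp g₀ φ p μ * pd i (fun q => phiUp g₀ φ q ν) p)) := by
  have hR := diff_rho hφ g₀ ε
  have Ds : DifferentiableAt ℝ (fun q => Real.sqrt (rho g₀ ε φ q)) p :=
    (hR p).sqrt (ne_of_gt (hρ p))
  have hsne : Real.sqrt (rho g₀ ε φ p) ≠ 0 := ne_of_gt (Real.sqrt_pos.mpr (hρ p))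
  have Dinv : DifferentiableAt ℝ (fun q => (Real.sqrt (rho g₀ ε φ q))⁻¹) p := Ds.inv hsne
  have DAμ : DifferentiableAt ℝ (fun q => phiUp g₀ φ q μ) p := (diff_phiUp hφ g₀ μ) p
  have DAν : DifferentiableAt ℝ (fun q => phiUp g₀ φ q ν) p := (diff_phiUp hφ g₀ ν) p
  have hfun : (fun q => gUp g₀ ε φ q μ ν) =
      fun q => (fun q => Real.sqrt (rho g₀ ε φ q) * g₀⁻¹ μ ν) q
        - (fun q => ε * ((fun q => (Real.sqrt (rho g₀ ε φ q))⁻¹) q *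
            ((fun q => phiUp g₀ φ q μ) q * (fun q => phiUp g₀ φ q ν) q))) q :=
    funext fun q => gUp_eq g₀ ε φ (hρ q) μ ν
  rw [hfun, pd_sub (Ds.mul_const _) ((Dinv.fun_mul (DAμ.fun_mul DAν)).const_mul ε),
    pd_mul_const Ds, pd_const_mul (Dinv.fun_mul (DAμ.fun_mul DAν)),
    pd_mul Dinv (DAμ.fun_mul DAν), pd_mul DAμ DAν,
    pd_inv Ds hsne, pd_sqrt (hR p) (hρ p)]

end gup

set_option maxHeartbeats 2000000 in
theorem stmt6 (g₀ : Matrix (Fin 2) (Fin 2) ℝ) (hsym : g₀.IsSymm) (hdet : g₀.det ≠ 0)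
    (ε : ℝ) (hε : ε = 1 ∨ ε = -1) (φ : (Fin 2 → ℝ) → ℝ) (hφ : ContDiff ℝ (⊤ : ℕ∞) φ)
    (hρ : ∀ p, 0 < rho g₀ ε φ p) (hmin : ∀ p, minimalAt g₀ ε φ p) :
    ∀ p : Fin 2 → ℝ, ∀ ν : Fin 2,
      ∑ μ, pd μ (fun q => gUp g₀ ε φ q μ ν) p = 0 := by
  intro p ν
  have hphi : ContDiff ℝ ((⊤:ℕ∞) : WithTop ℕ∞) φ := hφ.of_le (by simp)
  have hM : ∑ α, ∑ β, hUp g₀ ε φ p α β * pd2 α β φ p = 0 := hmin p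
  have hGsym : (g₀⁻¹).IsSymm := by
    rw [Matrix.IsSymm, Matrix.transpose_nonsing_inv, hsym.eq]
  have hG10 : g₀⁻¹ 1 0 = g₀⁻¹ 0 1 := hGsym.apply 0 1
  have hm10 : pd2 1 0 φ p = pd2 0 1 φ p := pd2_symm hphi 1 0 p
  have hpos := hρ p
  rw [show (0:ℝ) = (-(ε) * phiUp g₀ φ p ν / Real.sqrt (rho g₀ ε φ p)) *
      (∑ α, ∑ β, hUp g₀ ε φ p α β * pd2 α β φ p) from by rw [hM]; ring]
  rw [Fin.sum_univ_two, pd_gUp hphi g₀ ε hρ 0 0 ν p, pd_gUp hphi g₀ ε hρ 1 1 ν p,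
    pd_rho hphi g₀ ε 0 p, pd_rho hphi g₀ ε 1 p]
  simp only [hUp, Fin.sum_univ_two, pd_phiUp hphi g₀, phiUp_eq g₀ φ p]
  obtain rfl | rfl : ν = 0 ∨ ν = 1 := by omega
  all_goals
  · simp only [hG10, hm10]
    set r := rho g₀ ε φ p with hr
    set s := Real.sqrt r with hs
    have hss : r = s * s := (Real.mul_self_sqrt hpos.le).symm
    have hs0 : s ≠ 0 := ne_of_gt (Real.sqrt_pos.mpr hpos)
    rw [hss]
    field_simp
    ring
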